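/- arXiv:1308.5029 — 4 statements merged into one kernel-verified Lean document; each statement's English description precedes it below -/
import Mathlib

section
/- The set of common zeros of P = {x y² + z², x z + y} over ℂ equals the union of the zeros of the triangular sets T₁ = [(x³+1)y², xz+y] minus the vanishing of its initials, T₂ = [x²−x+1, xz+y] minus the vanishing of x, T₃ = [x+1, z−y], and T₄ = [x, y, z²]. -/
/-- Triangular decomposition of `P = {x y² + z², x z + y}` over `ℂ`:
`Zero(P) = Zero(T₁/{x³+1, x}) ∪ Zero(T₂/{x}) ∪ Zero(T₃) ∪ Zero(T₄)`. -/
theorem triangular_decomposition_example :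
    {p : ℂ × ℂ × ℂ | p.1 * p.2.1 ^ 2 + p.2.2 ^ 2 = 0 ∧ p.1 * p.2.2 + p.2.1 = 0} =
      {p : ℂ × ℂ × ℂ | (p.1 ^ 3 + 1) * p.2.1 ^ 2 = 0 ∧ p.1 * p.2.2 + p.2.1 = 0 ∧
          p.1 ^ 3 + 1 ≠ 0 ∧ p.1 ≠ 0} ∪
        {p : ℂ × ℂ × ℂ | p.1 ^ 2 - p.1 + 1 = 0 ∧ p.1 * p.2.2 + p.2.1 = 0 ∧ p.1 ≠ 0} ∪
        {p : ℂ × ℂ × ℂ | p.1 + 1 = 0 ∧ p.2.2 - p.2.1 = 0} ∪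
        {p : ℂ × ℂ × ℂ | p.1 = 0 ∧ p.2.1 = 0 ∧ p.2.2 ^ 2 = 0} := by
  ext ⟨x, y, z⟩
  simp only [Set.mem_setOf_eq, Set.mem_union]
  constructor
  · rintro ⟨h1, h2⟩
    by_cases hx : x = 0
    · right
      subst hx
      have hy : y = 0 := by linear_combination h2
      subst hy
      exact ⟨rfl, rfl, by linear_combination h1⟩
    · by_cases h3 : x ^ 3 + 1 = 0
      · have hfac : (x + 1) * (x ^ 2 - x + 1) = 0 := by linear_combination h3
        rcases mul_eq_zero.mp hfac with h4 | h4
        · left; right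
          refine ⟨h4, ?_⟩
          have hx1 : x = -1 := by linear_combination h4
          subst hx1
          linear_combination -h2
        · left; left; right
          exact ⟨h4, h2, hx⟩
      · have hz2 : z ^ 2 * (x ^ 3 + 1) = 0 := by
          linear_combination h1 + x * (x * z - y) * h2
        have hz : z = 0 := by
          have := (mul_eq_zero.mp hz2).resolve_right h3
          exact pow_eq_zero_iff (n := 2) (by norm_num) |>.mp this
        have hy : y = 0 := by linear_combination h2 - x * hz
        left; left; left
        subst hz; subst hy
        exact ⟨by ring, by ring, h3, hx⟩
  · rintro (((⟨h1, h2, h3, hx⟩ | ⟨h1, h2, hx⟩) | ⟨h1, h2⟩) | ⟨h1, h2, h3⟩)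
    · have hy : y = 0 := by
        have hy2 : y ^ 2 = 0 := (mul_eq_zero.mp h1).resolve_left h3
        exact pow_eq_zero_iff (n := 2) (by norm_num) |>.mp hy2
      have hz : z = 0 := by
        have := h2
        rw [hy, add_zero] at this
        exact (mul_eq_zero.mp this).resolve_left hx
      subst hy; subst hz
      constructor <;> ring
    · have h3 : x ^ 3 + 1 = 0 := by linear_combination (x + 1) * h1
      constructor
      · linear_combination z ^ 2 * h3 + x * (y - x * z) * h2
      · exact h2
    · have hx : x = -1 := by linear_combination h1
      have hz : z = y := by linear_combination h2
      subst hx; subst hz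
      constructor <;> ring
    · subst h1; subst h2
      exact ⟨by linear_combination h3, by ring⟩
end

section
/- For every (u, x, y) ∈ ℝ³ with u(32u − 27) ≠ 0, the pair (x, y) satisfies x³ − u y² = 0 and y² − 2x − 1 = 0 if and only if it satisfies −x³ + 2ux + u = 0 and −y² + 2x + 1 = 0. -/
/-- Correctness of the main branch of the triangular decomposition of
`{x³ − uy², y² − 2x − 1}`: if `u(32u − 27) ≠ 0` then the two systems have the
same real solutions. -/
theorem main_branch_equivalence (u x y : ℝ) (hu : u * (32 * u - 27) ≠ 0) :
    (x ^ 3 - u * y ^ 2 = 0 ∧ y ^ 2 - 2 * x - 1 = 0) ↔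
      (-x ^ 3 + 2 * u * x + u = 0 ∧ -y ^ 2 + 2 * x + 1 = 0) := by
  constructor
  · rintro ⟨h1, h2⟩
    have hy : y ^ 2 = 2 * x + 1 := by linarith
    rw [hy] at h1
    constructor <;> linarith
  · rintro ⟨h1, h2⟩
    have hy : y ^ 2 = 2 * x + 1 := by linarith
    rw [hy]
    constructor <;> linarith
end

section
/- Let P(u, x) = Σᵢ aᵢ(u)xⁱ be a polynomial in x with coefficients polynomial in parameters u, and Q₁,…,Q_s polynomials in (u, x). If A and B are two parameter points at which the border polynomial a_m(u)·discr(P)·∏ᵢ res(P, Qᵢ) does not vanish, and there is a continuous path from A to B along which the border polynomial never vanishes, then the system P = 0, Q₁ > 0, …, Q_s > 0 has the same number of distinct real solutions at A as at B. -/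
open Polynomial
open Filter Set

/-- The Sylvester matrix of two univariate polynomials `f` and `g`. -/
noncomputable def sylvesterMatrix {R : Type*} [CommRing R] (f g : Polynomial R) :
    Matrix (Fin (f.natDegree + g.natDegree)) (Fin (f.natDegree + g.natDegree)) R :=
  Matrix.of fun i j =>
    if (i : ℕ) < g.natDegree then
      (if (i : ℕ) ≤ (j : ℕ) ∧ (j : ℕ) ≤ (i : ℕ) + f.natDegree then
        f.coeff (f.natDegree + (i : ℕ) - (j : ℕ)) else 0)
    else
      (if (i : ℕ) - g.natDegree ≤ (j : ℕ) ∧ (j : ℕ) ≤ ((i : ℕ) - g.natDegree) + g.natDegree then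
        g.coeff (g.natDegree + ((i : ℕ) - g.natDegree) - (j : ℕ)) else 0)

/-- The Sylvester resultant of two univariate polynomials. -/
noncomputable def sylvesterResultant {R : Type*} [CommRing R] (f g : Polynomial R) : R :=
  (sylvesterMatrix f g).det



/-- If a real polynomial has no root on `Icc c d`, its values at two points of the
interval have the same (strict) sign. -/
lemma eval_mul_eval_pos (p : Polynomial ℝ) {c d a b : ℝ}
    (ha : a ∈ Set.Icc c d) (hb : b ∈ Set.Icc c d)
    (h : ∀ x ∈ Set.Icc c d, p.eval x ≠ 0) : 0 < p.eval a * p.eval b := by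
  rcases (h a ha).lt_or_gt with h1 | h1 <;> rcases (h b hb).lt_or_gt with h2 | h2
  · nlinarith
  · exfalso
    have hsub : Set.uIcc a b ⊆ Set.Icc c d := Set.uIcc_subset_Icc ha hb
    have := intermediate_value_uIcc (f := fun x => p.eval x) (a := a) (b := b)
      ((p.continuous_aeval.continuousOn).mono (fun x _ => trivial))
    have h0 : (0:ℝ) ∈ Set.uIcc (p.eval a) (p.eval b) := by
      rw [Set.mem_uIcc]; left; constructor <;> linarith
    obtain ⟨x, hx, hx0⟩ := this h0
    exact h x (hsub hx) hx0
  · exfalso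
    have hsub : Set.uIcc a b ⊆ Set.Icc c d := Set.uIcc_subset_Icc ha hb
    have := intermediate_value_uIcc (f := fun x => p.eval x) (a := a) (b := b)
      ((p.continuous_aeval.continuousOn).mono (fun x _ => trivial))
    have h0 : (0:ℝ) ∈ Set.uIcc (p.eval a) (p.eval b) := by
      rw [Set.mem_uIcc]; right; constructor <;> linarith
    obtain ⟨x, hx, hx0⟩ := this h0
    exact h x (hsub hx) hx0
  · nlinarith

/-- If `p'` has no zero on `Icc a b`, then `p` is strictly monotone or antitone there. -/
lemma strictMonoOn_or_strictAntiOn (p : Polynomial ℝ) {a b : ℝ} (hab : a ≤ b)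
    (hd : ∀ x ∈ Set.Icc a b, p.derivative.eval x ≠ 0) :
    StrictMonoOn (fun x => p.eval x) (Set.Icc a b) ∨
      StrictAntiOn (fun x => p.eval x) (Set.Icc a b) := by
  have hha : a ∈ Set.Icc a b := by constructor <;> linarith
  have hc : ContinuousOn (fun x => p.eval x) (Set.Icc a b) :=
    (Polynomial.continuous p).continuousOn
  rcases (hd a hha).lt_or_gt with hneg | hpos
  · right
    refine strictAntiOn_of_deriv_neg (convex_Icc a b) hc (fun x hx => ?_)
    rw [interior_Icc] at hx
    have hx' : x ∈ Set.Icc a b := ⟨hx.1.le, hx.2.le⟩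
    have := eval_mul_eval_pos p.derivative hx' hha hd
    rw [Polynomial.deriv]
    nlinarith
  · left
    refine strictMonoOn_of_deriv_pos (convex_Icc a b) hc (fun x hx => ?_)
    rw [interior_Icc] at hx
    have hx' : x ∈ Set.Icc a b := ⟨hx.1.le, hx.2.le⟩
    have := eval_mul_eval_pos p.derivative hx' hha hd
    rw [Polynomial.deriv]
    nlinarith

/-- A simple interior root forces a sign change at the endpoints. -/
lemma endpoint_sign_change (p : Polynomial ℝ) {a b x : ℝ} (hx : x ∈ Set.Ioo a b)
    (h0 : p.eval x = 0) (hd : ∀ y ∈ Set.Icc a b, p.derivative.eval y ≠ 0) :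
    p.eval a * p.eval b < 0 := by
  have hab : a ≤ b := le_of_lt (lt_trans hx.1 hx.2)
  have hxm : x ∈ Set.Icc a b := ⟨hx.1.le, hx.2.le⟩
  have hha : a ∈ Set.Icc a b := ⟨le_refl a, hab⟩
  have hhb : b ∈ Set.Icc a b := ⟨hab, le_refl b⟩
  rcases strictMonoOn_or_strictAntiOn p hab hd with hm | hm
  · have h1 : p.eval a < p.eval x := hm hha hxm hx.1
    have h2 : p.eval x < p.eval b := hm hxm hhb hx.2
    nlinarith
  · have h1 : p.eval x < p.eval a := hm hha hxm hx.1
    have h2 : p.eval b < p.eval x := hm hxm hhb hx.2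
    nlinarith

/-- Existence and uniqueness of a root in an interval where `p'` is nonvanishing and
`p` changes sign. -/
lemma existsUnique_root_Ioo (p : Polynomial ℝ) {a b : ℝ} (hab : a < b)
    (hd : ∀ x ∈ Set.Icc a b, p.derivative.eval x ≠ 0)
    (hs : p.eval a * p.eval b < 0) :
    ∃! x, x ∈ Set.Ioo a b ∧ p.eval x = 0 := by
  have hc : ContinuousOn (fun x => p.eval x) (Set.Icc a b) :=
    (Polynomial.continuous p).continuousOn
  have key : ∃ x, x ∈ Set.Ioo a b ∧ p.eval x = 0 := by
    rcases strictMonoOn_or_strictAntiOn p hab.le hd with hm | hm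
    · have h1 : p.eval a < p.eval b :=
        hm ⟨le_refl a, hab.le⟩ ⟨hab.le, le_refl b⟩ hab
      have h0 : (0:ℝ) ∈ Set.Ioo (p.eval a) (p.eval b) := by constructor <;> nlinarith
      obtain ⟨x, hx, hx0⟩ := intermediate_value_Ioo hab.le hc h0
      exact ⟨x, hx, hx0⟩
    · have h1 : p.eval b < p.eval a :=
        hm ⟨le_refl a, hab.le⟩ ⟨hab.le, le_refl b⟩ hab
      have h0 : (0:ℝ) ∈ Set.Ioo (p.eval b) (p.eval a) := by constructor <;> nlinarith
      obtain ⟨x, hx, hx0⟩ := intermediate_value_Ioo' hab.le hc h0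
      exact ⟨x, hx, hx0⟩
  obtain ⟨x, hx, hx0⟩ := key
  refine ⟨x, ⟨hx, hx0⟩, ?_⟩
  rintro y ⟨hy, hy0⟩
  have hinj : Set.InjOn (fun x => p.eval x) (Set.Icc a b) := by
    rcases strictMonoOn_or_strictAntiOn p hab.le hd with hm | hm
    · exact hm.injOn
    · exact hm.injOn
  exact hinj ⟨hy.1.le, hy.2.le⟩ ⟨hx.1.le, hx.2.le⟩ (by show eval y p = eval x p; rw [hy0, hx0])

/-- Row-sum computation for a (generalized) Sylvester matrix acting on the vector of
powers of a common root. -/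
lemma sylvester_row_sum (F : Polynomial ℝ) (m M t : ℕ) (hdeg : F.natDegree ≤ m)
    (ht : t + m < M) (x : ℝ) (hx : Polynomial.eval x F = 0) :
    ∑ j ∈ Finset.range M,
      (if t ≤ j ∧ j ≤ t + m then F.coeff (m + t - j) else 0) * x ^ (M - 1 - j) = 0 := by
  have step1 : ∑ j ∈ Finset.range M,
      (if t ≤ j ∧ j ≤ t + m then F.coeff (m + t - j) else 0) * x ^ (M - 1 - j)
      = ∑ j ∈ Finset.range M,
      (if t ≤ j ∧ j ≤ t + m then F.coeff (m + t - j) * x ^ (M - 1 - j) else 0) := by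
    apply Finset.sum_congr rfl; intro j _; rw [ite_mul, zero_mul]
  rw [step1, Finset.sum_ite, Finset.sum_const_zero, add_zero]
  have hset : (Finset.range M).filter (fun j => t ≤ j ∧ j ≤ t + m) = Finset.Icc t (t + m) := by
    ext j; simp only [Finset.mem_filter, Finset.mem_range, Finset.mem_Icc]; omega
  rw [hset, ← Finset.Ico_add_one_right_eq_Icc, Finset.sum_Ico_eq_sum_range]
  have hlen : t + m + 1 - t = m + 1 := by omega
  rw [hlen]
  have step2 : ∀ k ∈ Finset.range (m + 1),
      F.coeff (m + t - (t + k)) * x ^ (M - 1 - (t + k))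
        = (fun j => F.coeff (m - j) * x ^ ((M - 1 - t) - j)) k := by
    intro k hk; simp only []
    congr 2 <;> omega
  rw [Finset.sum_congr rfl step2]
  have hrefl := Finset.sum_range_reflect
    (fun j => F.coeff (m - j) * x ^ ((M - 1 - t) - j)) (m + 1)
  rw [← hrefl]
  have step3 : ∀ k ∈ Finset.range (m + 1),
      F.coeff (m - (m + 1 - 1 - k)) * x ^ ((M - 1 - t) - (m + 1 - 1 - k))
        = x ^ (M - 1 - t - m) * (F.coeff k * x ^ k) := by
    intro k hk
    simp only [Finset.mem_range] at hk
    have h1 : m - (m + 1 - 1 - k) = k := by omega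
    have h2 : (M - 1 - t) - (m + 1 - 1 - k) = (M - 1 - t - m) + k := by omega
    rw [h1, h2, pow_add]; ring
  rw [Finset.sum_congr rfl step3, ← Finset.mul_sum]
  have heval : ∑ k ∈ Finset.range (m + 1), F.coeff k * x ^ k = Polynomial.eval x F := by
    rw [Polynomial.eval_eq_sum_range' (Nat.lt_succ_of_le hdeg)]
  rw [heval, hx, mul_zero]

/-- If the evaluated Sylvester resultant is nonzero, the evaluated polynomials have
no common real root. -/
lemma resultant_no_common_root {d : ℕ} (f g : Polynomial (MvPolynomial (Fin d) ℝ))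
    (u : Fin d → ℝ) (hM : 0 < f.natDegree + g.natDegree)
    (h : MvPolynomial.eval u (sylvesterResultant f g) ≠ 0) (x : ℝ)
    (hf : Polynomial.eval x (f.map (MvPolynomial.eval u)) = 0)
    (hg : Polynomial.eval x (g.map (MvPolynomial.eval u)) = 0) : False := by
  classical
  set φ := MvPolynomial.eval u with hφ
  set m := f.natDegree
  set n := g.natDegree
  set M := m + n with hMdef
  set S : Matrix (Fin M) (Fin M) ℝ := φ.mapMatrix (sylvesterMatrix f g) with hS
  have hdet : S.det ≠ 0 := by
    rw [hS, ← RingHom.map_det]; exact h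
  set v : Fin M → ℝ := fun j => x ^ (M - 1 - (j : ℕ)) with hv
  have hmul : S.mulVec v = 0 := by
    funext i
    show ∑ j : Fin M, S i j * v j = 0
    have hentry : ∀ j : Fin M, S i j * v j =
        (fun jn : ℕ =>
          (if (i:ℕ) < n then
            (if (i:ℕ) ≤ jn ∧ jn ≤ (i:ℕ) + m then
              (f.map φ).coeff (m + (i:ℕ) - jn) else 0)
          else
            (if (i:ℕ) - n ≤ jn ∧ jn ≤ ((i:ℕ) - n) + n then
              (g.map φ).coeff (n + ((i:ℕ) - n) - jn) else 0)) * x ^ (M - 1 - jn)) (j : ℕ) := by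
      intro j
      simp only [hS, RingHom.mapMatrix_apply, Matrix.map_apply, sylvesterMatrix,
        Matrix.of_apply, hv, Polynomial.coeff_map]
      split_ifs <;> simp [m, n]
    calc ∑ j : Fin M, S i j * v j
        = ∑ jn ∈ Finset.range M, (fun jn : ℕ =>
          (if (i:ℕ) < n then
            (if (i:ℕ) ≤ jn ∧ jn ≤ (i:ℕ) + m then
              (f.map φ).coeff (m + (i:ℕ) - jn) else 0)
          else
            (if (i:ℕ) - n ≤ jn ∧ jn ≤ ((i:ℕ) - n) + n then
              (g.map φ).coeff (n + ((i:ℕ) - n) - jn) else 0)) * x ^ (M - 1 - jn)) jn := by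
          rw [← Fin.sum_univ_eq_sum_range]
          exact Finset.sum_congr rfl (fun j _ => hentry j)
      _ = 0 := by
          by_cases hi : (i : ℕ) < n
          · simp only [if_pos hi]
            exact sylvester_row_sum (f.map φ) m M (i:ℕ) Polynomial.natDegree_map_le
              (by omega) x hf
          · simp only [if_neg hi]
            have hi2 : (i : ℕ) < M := i.isLt
            exact sylvester_row_sum (g.map φ) n M ((i:ℕ) - n)
              Polynomial.natDegree_map_le (by omega) x hg
  have hv0 : v = 0 := Matrix.eq_zero_of_mulVec_eq_zero hdet hmul
  have hlast : v ⟨M - 1, by omega⟩ = 1 := by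
    simp [hv]
  rw [hv0] at hlast
  simp at hlast


/-- Joint continuity of `(u, x) ↦ (H.map (eval u)).eval x`. -/
lemma continuous_evalMap {d : ℕ} (H : Polynomial (MvPolynomial (Fin d) ℝ)) :
    Continuous fun z : (Fin d → ℝ) × ℝ =>
      Polynomial.eval z.2 (H.map (MvPolynomial.eval z.1)) := by
  have hfun : (fun z : (Fin d → ℝ) × ℝ =>
      Polynomial.eval z.2 (H.map (MvPolynomial.eval z.1)))
      = fun z => ∑ k ∈ Finset.range (H.natDegree + 1),
          (MvPolynomial.eval z.1 (H.coeff k)) * z.2 ^ k := by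
    funext z
    rw [Polynomial.eval_map, Polynomial.eval₂_eq_sum_range' _ (Nat.lt_succ_self _)]
  rw [hfun]
  apply continuous_finset_sum
  intro k _
  exact ((MvPolynomial.continuous_eval (H.coeff k)).comp continuous_fst).mul
    ((continuous_pow k).comp continuous_snd)

/-- Cauchy-type root bound: a real polynomial of degree `≤ m` with large leading
coefficient and bounded lower coefficients has no large roots. -/
lemma root_bound {p : Polynomial ℝ} {m : ℕ} (hm : 1 ≤ m) (hdeg : p.natDegree ≤ m)
    {c C x : ℝ} (hc : 0 < c) (hC : 0 < C) (hlead : c ≤ |p.coeff m|)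
    (hcoeff : ∀ k < m, |p.coeff k| ≤ C)
    (hx : max 1 (2 * m * C / c) < |x|) : Polynomial.eval x p ≠ 0 := by
  obtain ⟨m', rfl⟩ : ∃ m', m = m' + 1 := ⟨m - 1, by omega⟩
  have hx1 : (1:ℝ) < |x| := lt_of_le_of_lt (le_max_left _ _) hx
  have hx2 : 2 * (m' + 1 : ℕ) * C / c < |x| := lt_of_le_of_lt (le_max_right _ _) hx
  have hxm : 2 * (m' + 1) * C < c * |x| := by
    rw [div_lt_iff₀ hc] at hx2; push_cast at hx2 ⊢; linarith [hx2]
  set A := p.coeff (m' + 1) * x ^ (m' + 1) with hA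
  set Bs := ∑ k ∈ Finset.range (m' + 1), p.coeff k * x ^ k with hBs
  have heval : Polynomial.eval x p = Bs + A := by
    rw [Polynomial.eval_eq_sum_range' (Nat.lt_succ_of_le hdeg), Finset.sum_range_succ]
  have hBsle : |Bs| ≤ (m' + 1) * C * |x| ^ m' := by
    calc |Bs| ≤ ∑ k ∈ Finset.range (m' + 1), |p.coeff k * x ^ k| :=
          Finset.abs_sum_le_sum_abs _ _
      _ ≤ ∑ _k ∈ Finset.range (m' + 1), C * |x| ^ m' := by
          apply Finset.sum_le_sum
          intro k hk
          simp only [Finset.mem_range] at hk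
          rw [abs_mul, abs_pow]
          have h1 : |p.coeff k| ≤ C := hcoeff k (by omega)
          have h2 : |x| ^ k ≤ |x| ^ m' := pow_le_pow_right₀ hx1.le (by omega)
          have h3 : (0:ℝ) ≤ |x| ^ k := pow_nonneg (abs_nonneg x) k
          nlinarith [pow_nonneg (abs_nonneg x) m']
      _ = (m' + 1) * C * |x| ^ m' := by
          rw [Finset.sum_const, Finset.card_range, nsmul_eq_mul]
          push_cast; ring
  have hAge : c * |x| * |x| ^ m' ≤ |A| := by
    rw [hA, abs_mul, abs_pow, pow_succ]
    have h3 : (0:ℝ) ≤ |x| ^ m' := pow_nonneg (abs_nonneg x) m'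
    have : |x| ^ m' * |x| = |x| * |x| ^ m' := by ring
    rw [this]
    have h4 := mul_le_mul_of_nonneg_right hlead (mul_nonneg (abs_nonneg x) h3)
    nlinarith [h4]
  intro h0
  rw [heval] at h0
  have hABs : |A| = |Bs| := by
    have : A = -Bs := by linarith
    rw [this, abs_neg]
  have hxm' : (1:ℝ) ≤ |x| ^ m' := one_le_pow₀ hx1.le
  have hgt : (m' + 1) * C * |x| ^ m' < c * |x| * |x| ^ m' := by
    have : 2 * ((m':ℝ) + 1) * C < c * |x| := by push_cast at hxm ⊢; linarith
    have hCpos : (0:ℝ) < ((m':ℝ) + 1) * C := by positivity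
    nlinarith
  linarith [hBsle, hAge, hABs.symm.le]

lemma continuous_evalMap_fixed {d : ℕ} (H : Polynomial (MvPolynomial (Fin d) ℝ)) (x : ℝ) :
    Continuous fun u : Fin d → ℝ => Polynomial.eval x (H.map (MvPolynomial.eval u)) :=
  (continuous_evalMap H).comp (continuous_id.prodMk continuous_const)

lemma local_constancy (P : Polynomial (MvPolynomial (Fin d) ℝ))
    (Q : Fin s → Polynomial (MvPolynomial (Fin d) ℝ)) (u₀ : Fin d → ℝ)
    (hlc : MvPolynomial.eval u₀ P.leadingCoeff ≠ 0)
    (hdisc : MvPolynomial.eval u₀ (sylvesterResultant P P.derivative) ≠ 0)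
    (hres : ∀ i, MvPolynomial.eval u₀ (sylvesterResultant P (Q i)) ≠ 0) :
    ∀ᶠ u in nhds u₀,
      Set.ncard {x : ℝ | Polynomial.eval x (P.map (MvPolynomial.eval u)) = 0 ∧
        ∀ i, 0 < Polynomial.eval x ((Q i).map (MvPolynomial.eval u))}
      = Set.ncard {x : ℝ | Polynomial.eval x (P.map (MvPolynomial.eval u₀)) = 0 ∧
        ∀ i, 0 < Polynomial.eval x ((Q i).map (MvPolynomial.eval u₀))} := by
  classical
  by_cases hm0 : P.natDegree = 0
  · -- constant polynomial: no roots near u₀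
    have hlc0 : P.leadingCoeff = P.coeff 0 := by rw [Polynomial.leadingCoeff, hm0]
    have hPC : P = Polynomial.C (P.coeff 0) := Polynomial.eq_C_of_natDegree_eq_zero hm0
    have hempty : ∀ u : Fin d → ℝ, MvPolynomial.eval u (P.coeff 0) ≠ 0 →
        {x : ℝ | Polynomial.eval x (P.map (MvPolynomial.eval u)) = 0 ∧
          ∀ i, 0 < Polynomial.eval x ((Q i).map (MvPolynomial.eval u))} = ∅ := by
      intro u hu
      ext x
      simp only [Set.mem_setOf_eq, Set.mem_empty_iff_false, iff_false, not_and]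
      intro h0
      rw [hPC, Polynomial.map_C, Polynomial.eval_C] at h0
      exact absurd h0 hu
    have hev : ∀ᶠ u in nhds u₀, MvPolynomial.eval u (P.coeff 0) ≠ 0 :=
      ((MvPolynomial.continuous_eval (P.coeff 0)).continuousAt).eventually_ne
        (by rw [← hlc0]; exact hlc)
    filter_upwards [hev] with u hu
    rw [hempty u hu, hempty u₀ (by rw [← hlc0]; exact hlc)]
  · have hm : 1 ≤ P.natDegree := by omega
    have hp₀ne : P.map (MvPolynomial.eval u₀) ≠ 0 := by
      intro h0
      apply hlc
      have : (Polynomial.map (MvPolynomial.eval u₀) P).coeff P.natDegree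
          = MvPolynomial.eval u₀ (P.coeff P.natDegree) := Polynomial.coeff_map _ _
      rw [h0, Polynomial.coeff_zero] at this
      rw [← Polynomial.coeff_natDegree]
      exact this.symm
    -- roots of the specialized polynomial
    set R : Finset ℝ := (P.map (MvPolynomial.eval u₀)).roots.toFinset with hRdef
    have hR : ∀ x : ℝ, x ∈ R ↔ Polynomial.eval x (P.map (MvPolynomial.eval u₀)) = 0 := by
      intro x
      rw [hRdef, Multiset.mem_toFinset, Polynomial.mem_roots hp₀ne]
      rfl
    have hsimple : ∀ x : ℝ, Polynomial.eval x (P.map (MvPolynomial.eval u₀)) = 0 →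
        Polynomial.eval x ((P.map (MvPolynomial.eval u₀)).derivative) ≠ 0 := by
      intro x hx hcon
      rw [Polynomial.derivative_map] at hcon
      exact resultant_no_common_root P P.derivative u₀ (by omega) hdisc x hx hcon
    have hqroot : ∀ (i : Fin s) (x : ℝ),
        Polynomial.eval x (P.map (MvPolynomial.eval u₀)) = 0 →
        Polynomial.eval x ((Q i).map (MvPolynomial.eval u₀)) ≠ 0 := by
      intro i x hx hcon
      exact resultant_no_common_root P (Q i) u₀ (by omega) (hres i) x hx hcon
    -- choice of ε
    have hεex : ∃ ε : ℝ, 0 < ε ∧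
        (∀ r ∈ R, ∀ r' ∈ R, r ≠ r' → 2 * ε < |r - r'|) ∧
        (∀ r ∈ R, ∀ x ∈ Set.Icc (r - ε) (r + ε),
          Polynomial.eval x ((P.map (MvPolynomial.eval u₀)).derivative) ≠ 0 ∧
          ∀ i, Polynomial.eval x ((Q i).map (MvPolynomial.eval u₀)) ≠ 0) := by
      have h1 : ∀ᶠ ε in nhdsWithin (0:ℝ) (Set.Ioi 0),
          ∀ r ∈ R, ∀ r' ∈ R, r ≠ r' → 2 * ε < |r - r'| := by
        rw [eventually_all_finset]
        intro r hr
        rw [eventually_all_finset]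
        intro r' hr'
        by_cases hne : r = r'
        · exact Filter.Eventually.of_forall (fun ε h => absurd hne h)
        · have hpos : 0 < |r - r'| / 2 := by
            have := abs_pos.mpr (sub_ne_zero.mpr hne)
            linarith
          apply Filter.mem_of_superset (Ioo_mem_nhdsGT_of_mem ⟨le_refl (0:ℝ), hpos⟩)
          intro ε hε _
          have := hε.2
          simp only [Set.mem_Ioo] at hε
          linarith [hε.2]
      have h2 : ∀ᶠ ε in nhdsWithin (0:ℝ) (Set.Ioi 0),
          ∀ r ∈ R, ∀ x ∈ Set.Icc (r - ε) (r + ε),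
            Polynomial.eval x ((P.map (MvPolynomial.eval u₀)).derivative) ≠ 0 ∧
            ∀ i, Polynomial.eval x ((Q i).map (MvPolynomial.eval u₀)) ≠ 0 := by
        rw [eventually_all_finset]
        intro r hr
        set H : Polynomial ℝ := (P.map (MvPolynomial.eval u₀)).derivative *
          ∏ i : Fin s, (Q i).map (MvPolynomial.eval u₀) with hHdef
        have hrR := (hR r).1 hr
        have hHr : Polynomial.eval r H ≠ 0 := by
          rw [hHdef, Polynomial.eval_mul, Polynomial.eval_prod]
          exact mul_ne_zero (hsimple r hrR)
            (Finset.prod_ne_zero_iff.2 (fun i _ => hqroot i r hrR))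
        obtain ⟨δ, hδ, hball⟩ := Metric.eventually_nhds_iff_ball.1
          ((H.continuous.continuousAt).eventually_ne hHr)
        apply Filter.mem_of_superset (Ioo_mem_nhdsGT_of_mem ⟨le_refl (0:ℝ), hδ⟩)
        intro ε hε x hx
        simp only [Set.mem_Ioo] at hε
        have hxball : x ∈ Metric.ball r δ := by
          rw [Metric.mem_ball, Real.dist_eq]
          have h1' := hx.1
          have h2' := hx.2
          have : |x - r| ≤ ε := abs_le.mpr ⟨by linarith, by linarith⟩
          linarith
        have hHx := hball x hxball
        rw [hHdef, Polynomial.eval_mul, Polynomial.eval_prod] at hHx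
        constructor
        · exact fun h0 => hHx (by rw [h0, zero_mul])
        · intro i h0
          apply hHx
          rw [Finset.prod_eq_zero (Finset.mem_univ i) h0, mul_zero]
      obtain ⟨ε, hεall, hεmem⟩ := ((h1.and h2).and self_mem_nhdsWithin).exists
      exact ⟨ε, hεmem, hεall.1, hεall.2⟩
    obtain ⟨ε, hε, hsep, hloc⟩ := hεex
    -- constants
    set c : ℝ := |MvPolynomial.eval u₀ P.leadingCoeff| with hcdef
    have hc : 0 < c := abs_pos.mpr hlc
    set C : ℝ := 1 + ∑ k ∈ Finset.range P.natDegree,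
      |MvPolynomial.eval u₀ (P.coeff k)| with hCdef
    have hCpos : 0 < C := by
      rw [hCdef]
      have : 0 ≤ ∑ k ∈ Finset.range P.natDegree, |MvPolynomial.eval u₀ (P.coeff k)| :=
        Finset.sum_nonneg (fun _ _ => abs_nonneg _)
      linarith
    set ρ : ℝ := max 1 (2 * P.natDegree * C / (c / 2)) + 1 with hρdef
    set K : Set ℝ := Set.Icc (-ρ) ρ ∩ ⋂ r ∈ R, {x : ℝ | ε ≤ |x - r|} with hKdef
    have hKcomp : IsCompact K := by
      apply isCompact_Icc.inter_right
      apply isClosed_biInter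
      intro r _
      exact isClosed_le continuous_const ((continuous_id.sub continuous_const).abs)
    have hKne : ∀ x ∈ K, Polynomial.eval x (P.map (MvPolynomial.eval u₀)) ≠ 0 := by
      rintro x ⟨_, hx2⟩ hx0
      rw [Set.mem_iInter₂] at hx2
      have := hx2 x ((hR x).2 hx0)
      simp only [Set.mem_setOf_eq, sub_self, abs_zero] at this
      linarith
    -- the eventual conditions
    have E1 : ∀ᶠ u in nhds u₀, c / 2 < |MvPolynomial.eval u P.leadingCoeff| := by
      have hcont : Continuous fun u : Fin d → ℝ => |MvPolynomial.eval u P.leadingCoeff| :=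
        (MvPolynomial.continuous_eval _).abs
      exact hcont.continuousAt.eventually (eventually_gt_nhds (by linarith))
    have E2 : ∀ᶠ u in nhds u₀, ∀ k ∈ Finset.range P.natDegree,
        |MvPolynomial.eval u (P.coeff k)| < C := by
      rw [eventually_all_finset]
      intro k hk
      have hk0 : |MvPolynomial.eval u₀ (P.coeff k)| < C := by
        rw [hCdef]
        have := Finset.single_le_sum
          (f := fun k => |MvPolynomial.eval u₀ (P.coeff k)|)
          (fun i _ => abs_nonneg _) hk
        linarith
      exact ((MvPolynomial.continuous_eval _).abs.continuousAt).eventually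
        (eventually_lt_nhds hk0)
    have E3 : ∀ᶠ u in nhds u₀, ∀ x ∈ K,
        Polynomial.eval x (P.map (MvPolynomial.eval u)) ≠ 0 := by
      apply hKcomp.eventually_forall_of_forall_eventually
      intro y hy
      exact (continuous_evalMap P).continuousAt.eventually_ne (hKne y hy)
    have E4 : ∀ᶠ u in nhds u₀, ∀ r ∈ R, ∀ x ∈ Set.Icc (r - ε) (r + ε),
        0 < Polynomial.eval x (P.derivative.map (MvPolynomial.eval u)) *
          Polynomial.eval r ((P.map (MvPolynomial.eval u₀)).derivative) := by
      rw [eventually_all_finset]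
      intro r hr
      apply isCompact_Icc.eventually_forall_of_forall_eventually
      intro y hy
      have hrmem : r ∈ Set.Icc (r - ε) (r + ε) := ⟨by linarith, by linarith⟩
      have hpos : 0 < Polynomial.eval y ((P.map (MvPolynomial.eval u₀)).derivative) *
          Polynomial.eval r ((P.map (MvPolynomial.eval u₀)).derivative) :=
        eval_mul_eval_pos _ hy hrmem (fun x hx => (hloc r hr x hx).1)
      have hcont : ContinuousAt (fun z : (Fin d → ℝ) × ℝ =>
          Polynomial.eval z.2 (P.derivative.map (MvPolynomial.eval z.1)) *
            Polynomial.eval r ((P.map (MvPolynomial.eval u₀)).derivative)) (u₀, y) :=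
        ((continuous_evalMap P.derivative).mul continuous_const).continuousAt
      apply hcont.eventually
      apply eventually_gt_nhds
      show 0 < Polynomial.eval y (P.derivative.map (MvPolynomial.eval u₀)) *
        Polynomial.eval r ((P.map (MvPolynomial.eval u₀)).derivative)
      rw [← Polynomial.derivative_map]
      exact hpos
    have E5 : ∀ᶠ u in nhds u₀, ∀ r ∈ R,
        (0 < Polynomial.eval (r - ε) (P.map (MvPolynomial.eval u)) *
          Polynomial.eval (r - ε) (P.map (MvPolynomial.eval u₀))) ∧
        (0 < Polynomial.eval (r + ε) (P.map (MvPolynomial.eval u)) *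
          Polynomial.eval (r + ε) (P.map (MvPolynomial.eval u₀))) := by
      rw [eventually_all_finset]
      intro r hr
      have hend : ∀ x : ℝ, x ∈ R → x ≠ r → False → True := fun _ _ _ _ => trivial
      have hne : ∀ x : ℝ, |x - r| = ε → Polynomial.eval x (P.map (MvPolynomial.eval u₀)) ≠ 0 := by
        intro x hxd hx0
        have hxR : x ∈ R := (hR x).2 hx0
        have hxne : x ≠ r := by
          intro h
          rw [h, sub_self, abs_zero] at hxd
          linarith
        have := hsep x hxR r hr hxne
        rw [hxd] at this
        linarith
      have hne1 : Polynomial.eval (r - ε) (P.map (MvPolynomial.eval u₀)) ≠ 0 := by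
        apply hne
        have : r - ε - r = -ε := by ring
        rw [this, abs_neg, abs_of_pos hε]
      have hne2 : Polynomial.eval (r + ε) (P.map (MvPolynomial.eval u₀)) ≠ 0 := by
        apply hne
        have : r + ε - r = ε := by ring
        rw [this, abs_of_pos hε]
      have ev1 : ∀ᶠ u in nhds u₀,
          0 < Polynomial.eval (r - ε) (P.map (MvPolynomial.eval u)) *
            Polynomial.eval (r - ε) (P.map (MvPolynomial.eval u₀)) := by
        have hcont : Continuous fun u : Fin d → ℝ =>
            Polynomial.eval (r - ε) (P.map (MvPolynomial.eval u)) *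
              Polynomial.eval (r - ε) (P.map (MvPolynomial.eval u₀)) :=
          (continuous_evalMap_fixed P (r - ε)).mul continuous_const
        apply hcont.continuousAt.eventually
        apply eventually_gt_nhds
        exact mul_self_pos.mpr hne1
      have ev2 : ∀ᶠ u in nhds u₀,
          0 < Polynomial.eval (r + ε) (P.map (MvPolynomial.eval u)) *
            Polynomial.eval (r + ε) (P.map (MvPolynomial.eval u₀)) := by
        have hcont : Continuous fun u : Fin d → ℝ =>
            Polynomial.eval (r + ε) (P.map (MvPolynomial.eval u)) *
              Polynomial.eval (r + ε) (P.map (MvPolynomial.eval u₀)) :=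
          (continuous_evalMap_fixed P (r + ε)).mul continuous_const
        apply hcont.continuousAt.eventually
        apply eventually_gt_nhds
        exact mul_self_pos.mpr hne2
      exact ev1.and ev2
    have E6 : ∀ᶠ u in nhds u₀, ∀ r ∈ R, ∀ i : Fin s, ∀ x ∈ Set.Icc (r - ε) (r + ε),
        0 < Polynomial.eval x ((Q i).map (MvPolynomial.eval u)) *
          Polynomial.eval r ((Q i).map (MvPolynomial.eval u₀)) := by
      rw [eventually_all_finset]
      intro r hr
      rw [Filter.eventually_all]
      intro i
      apply isCompact_Icc.eventually_forall_of_forall_eventually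
      intro y hy
      have hrmem : r ∈ Set.Icc (r - ε) (r + ε) := ⟨by linarith, by linarith⟩
      have hpos : 0 < Polynomial.eval y ((Q i).map (MvPolynomial.eval u₀)) *
          Polynomial.eval r ((Q i).map (MvPolynomial.eval u₀)) :=
        eval_mul_eval_pos _ hy hrmem (fun x hx => (hloc r hr x hx).2 i)
      have hcont : ContinuousAt (fun z : (Fin d → ℝ) × ℝ =>
          Polynomial.eval z.2 ((Q i).map (MvPolynomial.eval z.1)) *
            Polynomial.eval r ((Q i).map (MvPolynomial.eval u₀))) (u₀, y) :=
        ((continuous_evalMap (Q i)).mul continuous_const).continuousAt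
      exact hcont.eventually (eventually_gt_nhds hpos)
    -- the counting argument
    set T : Set ℝ := {r : ℝ | r ∈ R ∧
      ∀ i, 0 < Polynomial.eval r ((Q i).map (MvPolynomial.eval u₀))} with hTdef
    have hcount : ∀ u : Fin d → ℝ,
        (c / 2 < |MvPolynomial.eval u P.leadingCoeff|) →
        (∀ k ∈ Finset.range P.natDegree, |MvPolynomial.eval u (P.coeff k)| < C) →
        (∀ x ∈ K, Polynomial.eval x (P.map (MvPolynomial.eval u)) ≠ 0) →
        (∀ r ∈ R, ∀ x ∈ Set.Icc (r - ε) (r + ε),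
          0 < Polynomial.eval x (P.derivative.map (MvPolynomial.eval u)) *
            Polynomial.eval r ((P.map (MvPolynomial.eval u₀)).derivative)) →
        (∀ r ∈ R,
          (0 < Polynomial.eval (r - ε) (P.map (MvPolynomial.eval u)) *
            Polynomial.eval (r - ε) (P.map (MvPolynomial.eval u₀))) ∧
          (0 < Polynomial.eval (r + ε) (P.map (MvPolynomial.eval u)) *
            Polynomial.eval (r + ε) (P.map (MvPolynomial.eval u₀)))) →
        (∀ r ∈ R, ∀ i : Fin s, ∀ x ∈ Set.Icc (r - ε) (r + ε),
          0 < Polynomial.eval x ((Q i).map (MvPolynomial.eval u)) *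
            Polynomial.eval r ((Q i).map (MvPolynomial.eval u₀))) →
        {x : ℝ | Polynomial.eval x (P.map (MvPolynomial.eval u)) = 0 ∧
          ∀ i, 0 < Polynomial.eval x ((Q i).map (MvPolynomial.eval u))}.ncard = T.ncard := by
      intro u h1 h2 h3 h4 h5 h6
      have Hroot : ∀ r : ℝ, r ∈ R → ∃ x, (x ∈ Set.Ioo (r - ε) (r + ε) ∧
          Polynomial.eval x (P.map (MvPolynomial.eval u)) = 0) ∧
          ∀ y, (y ∈ Set.Ioo (r - ε) (r + ε) ∧
            Polynomial.eval y (P.map (MvPolynomial.eval u)) = 0) → y = x := by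
        intro r hr
        have := existsUnique_root_Ioo (P.map (MvPolynomial.eval u))
          (a := r - ε) (b := r + ε) (by linarith)
          (fun x hx => by
            rw [Polynomial.derivative_map]
            intro h0
            have := h4 r hr x hx
            rw [h0, zero_mul] at this
            exact lt_irrefl 0 this)
          (by
            have h5r := h5 r hr
            have hsign : Polynomial.eval (r - ε) (P.map (MvPolynomial.eval u₀)) *
                Polynomial.eval (r + ε) (P.map (MvPolynomial.eval u₀)) < 0 := by
              apply endpoint_sign_change (P.map (MvPolynomial.eval u₀))
                (x := r) ⟨by linarith, by linarith⟩ ((hR r).1 hr)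
              exact fun y hy => (hloc r hr y hy).1
            nlinarith [h5r.1, h5r.2])
        obtain ⟨x, hx, hu⟩ := this
        exact ⟨x, hx, hu⟩
      choose! ξ hprop huniq using Hroot
      have hsub1 : {x : ℝ | Polynomial.eval x (P.map (MvPolynomial.eval u)) = 0 ∧
          ∀ i, 0 < Polynomial.eval x ((Q i).map (MvPolynomial.eval u))} = ξ '' T := by
        ext x
        simp only [Set.mem_setOf_eq, Set.mem_image]
        constructor
        · rintro ⟨hx0, hxq⟩
          have hxρ : |x| ≤ ρ := by
            by_contra hgt
            push_neg at hgt
            refine root_bound hm Polynomial.natDegree_map_le (half_pos hc) hCpos ?_ ?_ ?_ hx0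
            · rw [Polynomial.coeff_map, Polynomial.coeff_natDegree]
              linarith [h1]
            · intro k hk
              rw [Polynomial.coeff_map]
              exact (h2 k (Finset.mem_range.mpr hk)).le
            · rw [hρdef] at hgt
              calc max 1 (2 * ↑P.natDegree * C / (c / 2))
                  < max 1 (2 * ↑P.natDegree * C / (c / 2)) + 1 := by linarith
                _ < |x| := hgt
          have hnear : ∃ r ∈ R, |x - r| < ε := by
            by_contra hno
            push_neg at hno
            have hxK : x ∈ K := by
              rw [hKdef]
              refine ⟨⟨?_, ?_⟩, ?_⟩
              · linarith [(abs_le.1 hxρ).1]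
              · linarith [(abs_le.1 hxρ).2]
              · rw [Set.mem_iInter₂]
                exact fun r hr => hno r hr
            exact h3 x hxK hx0
          obtain ⟨r, hr, hrx⟩ := hnear
          have hxIoo : x ∈ Set.Ioo (r - ε) (r + ε) := by
            rcases abs_lt.1 hrx with ⟨ha, hb⟩
            exact ⟨by linarith, by linarith⟩
          have hxeq : x = ξ r := huniq r hr x ⟨hxIoo, hx0⟩
          refine ⟨r, ⟨hr, fun i => ?_⟩, hxeq.symm⟩
          have h6' := h6 r hr i x ⟨hxIoo.1.le, hxIoo.2.le⟩
          nlinarith [hxq i]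
        · rintro ⟨r, ⟨hrR, hrq⟩, rfl⟩
          have hm1 := hprop r hrR
          refine ⟨hm1.2, fun i => ?_⟩
          have h6' := h6 r hrR i (ξ r) ⟨hm1.1.1.le, hm1.1.2.le⟩
          nlinarith [hrq i]
      have hinj : Set.InjOn ξ T := by
        rintro r ⟨hrR, _⟩ r' ⟨hrR', _⟩ heq
        by_contra hne
        have hsep' := hsep r hrR r' hrR' hne
        have h1' := (hprop r hrR).1
        have h2' := (hprop r' hrR').1
        have hd1 : |r - ξ r| < ε := abs_lt.2 ⟨by linarith [h1'.2], by linarith [h1'.1]⟩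
        have hd2 : |ξ r' - r'| < ε := abs_lt.2 ⟨by linarith [h2'.1], by linarith [h2'.2]⟩
        have htri := abs_sub_le r (ξ r) r'
        rw [heq] at htri hd1
        linarith
      rw [hsub1, Set.ncard_image_of_injOn hinj]
    -- conclude
    have hbase : {x : ℝ | Polynomial.eval x (P.map (MvPolynomial.eval u₀)) = 0 ∧
        ∀ i, 0 < Polynomial.eval x ((Q i).map (MvPolynomial.eval u₀))}.ncard = T.ncard :=
      hcount u₀ E1.self_of_nhds E2.self_of_nhds E3.self_of_nhds E4.self_of_nhds
        E5.self_of_nhds E6.self_of_nhds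
    filter_upwards [E1, E2, E3, E4, E5, E6] with u h1 h2 h3 h4 h5 h6
    rw [hcount u h1 h2 h3 h4 h5 h6, hbase]

/-- Invariance of the number of distinct real solutions of
`P = 0, Q₁ > 0, …, Q_s > 0` on parameter regions avoiding the border polynomial
`a_m(u) · discr(P) · ∏ᵢ res(P, Qᵢ)`: if the border polynomial does not vanish at
parameter points `A`, `B` and there is a continuous path from `A` to `B` along
which it never vanishes, then the solution counts at `A` and `B` agree. -/
theorem border_polynomial_invariance (d s : ℕ)
    (P : Polynomial (MvPolynomial (Fin d) ℝ))
    (Q : Fin s → Polynomial (MvPolynomial (Fin d) ℝ))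
    (B : MvPolynomial (Fin d) ℝ)
    (hB : B = P.leadingCoeff * sylvesterResultant P P.derivative *
      ∏ i : Fin s, sylvesterResultant P (Q i))
    (A₀ B₀ : Fin d → ℝ)
    (hA : MvPolynomial.eval A₀ B ≠ 0) (hB₀ : MvPolynomial.eval B₀ B ≠ 0)
    (γ : ℝ → (Fin d → ℝ)) (hγc : ContinuousOn γ (Set.Icc 0 1))
    (hγ0 : γ 0 = A₀) (hγ1 : γ 1 = B₀)
    (hγ : ∀ t ∈ Set.Icc (0 : ℝ) 1, MvPolynomial.eval (γ t) B ≠ 0) :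
    Set.ncard {x : ℝ | Polynomial.eval x (P.map (MvPolynomial.eval A₀)) = 0 ∧
        ∀ i : Fin s, Polynomial.eval x ((Q i).map (MvPolynomial.eval A₀)) > 0} =
      Set.ncard {x : ℝ | Polynomial.eval x (P.map (MvPolynomial.eval B₀)) = 0 ∧
        ∀ i : Fin s, Polynomial.eval x ((Q i).map (MvPolynomial.eval B₀)) > 0} := by
  classical
  have hfac : ∀ u : Fin d → ℝ, MvPolynomial.eval u B ≠ 0 →
      MvPolynomial.eval u P.leadingCoeff ≠ 0 ∧
      MvPolynomial.eval u (sylvesterResultant P P.derivative) ≠ 0 ∧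
      ∀ i, MvPolynomial.eval u (sylvesterResultant P (Q i)) ≠ 0 := by
    intro u hu
    rw [hB, map_mul, map_mul, map_prod] at hu
    refine ⟨fun h => hu ?_, fun h => hu ?_, fun i => ?_⟩
    · rw [h, zero_mul, zero_mul]
    · rw [h, mul_zero, zero_mul]
    · intro h
      apply hu
      rw [Finset.prod_eq_zero (Finset.mem_univ i) h, mul_zero]
  set N : (Fin d → ℝ) → ℕ := fun u =>
    Set.ncard {x : ℝ | Polynomial.eval x (P.map (MvPolynomial.eval u)) = 0 ∧
      ∀ i, 0 < Polynomial.eval x ((Q i).map (MvPolynomial.eval u))} with hNdef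
  have hlocN : ∀ u : Fin d → ℝ, MvPolynomial.eval u B ≠ 0 →
      ∀ᶠ u' in nhds u, N u' = N u := by
    intro u hu
    obtain ⟨h1, h2, h3⟩ := hfac u hu
    exact local_constancy P Q u h1 h2 h3
  have hcont : ContinuousOn (fun t => N (γ t)) (Set.Icc (0:ℝ) 1) := by
    intro t ht
    have hev : ∀ᶠ u' in nhds (γ t), N u' = N (γ t) := hlocN (γ t) (hγ t ht)
    have htend := (hγc t ht).eventually hev
    unfold ContinuousWithinAt
    have hpure : nhds (N (γ t)) = pure (N (γ t)) := by rw [nhds_discrete]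
    rw [hpure, Filter.tendsto_pure]
    exact htend
  have himg : IsPreconnected ((fun t => N (γ t)) '' Set.Icc (0:ℝ) 1) :=
    isPreconnected_Icc.image _ hcont
  have hsub : ((fun t => N (γ t)) '' Set.Icc (0:ℝ) 1).Subsingleton :=
    himg.subsingleton
  have h0mem : N (γ 0) ∈ (fun t => N (γ t)) '' Set.Icc (0:ℝ) 1 :=
    ⟨0, ⟨le_refl 0, zero_le_one⟩, rfl⟩
  have h1mem : N (γ 1) ∈ (fun t => N (γ t)) '' Set.Icc (0:ℝ) 1 :=
    ⟨1, ⟨zero_le_one, le_refl 1⟩, rfl⟩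
  have : N (γ 0) = N (γ 1) := hsub h0mem h1mem
  rw [hγ0, hγ1] at this
  exact this
end

section
/- Let (d, m) ∈ ℝ² satisfy m ≠ 0, m + 1 ≠ 0, and d − 2m − 1 ≠ 0. Then (c_L, c_*, c_H) ∈ ℝ³ is a common zero of P₁ = (c_H − c_L)c_L − (1 − c_H)m, P₂ = (1 − 2c_H + 2c_L)c_H − c_L d, P₃ = (1 − c_H)(m − c_*) − c_L c_* + c_L d if and only if it is a common zero of the triangular set T₁ = (d − 2m − 1)c_L³ + (2md + m)c_L² + (dm² − 2m² − m)c_L + m², T₂ = (−m − 1)c_* − m c_L + d c_L + dm + m, T₃ = (−c_L − m)c_H + c_L² + m. -/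
/-- Correctness of the main branch of the triangular decomposition of the
arms-race equilibrium equations. -/
theorem arms_race_main_branch (d m cL cs cH : ℝ)
    (hm : m ≠ 0) (hm1 : m + 1 ≠ 0) (hd : d - 2 * m - 1 ≠ 0) :
    ((cH - cL) * cL - (1 - cH) * m = 0 ∧
      (1 - 2 * cH + 2 * cL) * cH - cL * d = 0 ∧
      (1 - cH) * (m - cs) - cL * cs + cL * d = 0) ↔
    ((d - 2 * m - 1) * cL ^ 3 + (2 * m * d + m) * cL ^ 2 +
        (d * m ^ 2 - 2 * m ^ 2 - m) * cL + m ^ 2 = 0 ∧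
      (-m - 1) * cs - m * cL + d * cL + d * m + m = 0 ∧
      (-cL - m) * cH + cL ^ 2 + m = 0) := by
  constructor
  · rintro ⟨h1, h2, h3⟩
    have hcL : cL ≠ 0 := by
      intro h0
      rw [h0] at h1 h2
      have hch : cH = 1 := by
        have : m * (cH - 1) = 0 := by linarith [h1]
        rcases mul_eq_zero.mp this with h | h
        · exact absurd h hm
        · linarith
      rw [hch] at h2; norm_num at h2
    refine ⟨by linear_combination (cL - m + 2 * cL * m - 2 * cH * (cL + m)) * h1 - (cL + m) ^ 2 * h2, ?_, by linear_combination -h1⟩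
    · -- cL * T2 = (cL+m) * P3 - (cs - m) * P1
      have : cL * ((-m - 1) * cs - m * cL + d * cL + d * m + m) = 0 := by
        linear_combination (cL + m) * h3 - (cs - m) * h1
      exact (mul_eq_zero.mp this).resolve_left hcL
  · rintro ⟨t1, t2, t3⟩
    have hclm : cL + m ≠ 0 := by
      intro h0
      have hcl : cL = -m := by linarith
      rw [hcl] at t3
      have : m * (m + 1) = 0 := by linarith [t3]
      rcases mul_eq_zero.mp this with h | h
      · exact hm h
      · exact hm1 h
    have h1 : (cH - cL) * cL - (1 - cH) * m = 0 := by linear_combination -t3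
    refine ⟨h1, ?_, ?_⟩
    · have : (cL + m) ^ 2 * ((1 - 2 * cH + 2 * cL) * cH - cL * d) = 0 := by
        linear_combination (cL - m + 2 * cL * m - 2 * cH * (cL + m)) * h1 - t1
      exact (mul_eq_zero.mp this).resolve_left (pow_ne_zero 2 hclm)
    · have : (cL + m) * ((1 - cH) * (m - cs) - cL * cs + cL * d) = 0 := by
        linear_combination cL * t2 + (cs - m) * h1
      exact (mul_eq_zero.mp this).resolve_left hclm
end
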